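/- For a tangential vector field u on S² with extension ũ to a neighborhood of S², and x ∈ S², one has π_x(ũ(x) × (∇ × ũ)(x)) = (u(x) × x) · (x · (∇ × ũ)(x)), i.e. the projection of ũ × curl ũ onto the tangent plane equals (u × x) times the scalar curl of u. -/

import Mathlib

open RealInnerProductSpace

noncomputable section

/-- ℝ³ with the Euclidean structure. -/
abbrev E3 := EuclideanSpace ℝ (Fin 3)

/-- Cross product on ℝ³. -/
def cross3 (a b : E3) : E3 := WithLp.toLp 2 (crossProduct (a : Fin 3 → ℝ) (b : Fin 3 → ℝ))

/-- Orthogonal projection of ℝ³ onto the tangent plane T_x S². -/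
def projT (x w : E3) : E3 := w - ⟪w, x⟫ • x

/-! With ‖x‖ = 1 the tangential projection is v ↦ (x × v) × x, and by the BAC–CAB rule
x × (u × w) = (x·w) u − (x·u) w, which is (x·w) u for tangential u. -/

lemma inner_eq_dotProduct (a b : E3) : ⟪a, b⟫ = (a : Fin 3 → ℝ) ⬝ᵥ (b : Fin 3 → ℝ) := by
  rw [EuclideanSpace.inner_eq_star_dotProduct, star_trivial, dotProduct_comm]

lemma cross3_cross3_left (a b c : E3) : cross3 (cross3 a b) c = ⟪a, c⟫ • b - ⟪b, c⟫ • a := by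
  simp only [cross3, inner_eq_dotProduct, cross_cross_eq_smul_sub_smul]
  rfl

lemma cross3_cross3_right (a b c : E3) : cross3 a (cross3 b c) = ⟪a, c⟫ • b - ⟪b, a⟫ • c := by
  simp only [cross3, inner_eq_dotProduct, cross_cross_eq_smul_sub_smul']
  rfl

lemma cross3_smul_left (r : ℝ) (a b : E3) : cross3 (r • a) b = r • cross3 a b := by
  simp only [cross3, WithLp.ofLp_smul, LinearMap.map_smul₂, WithLp.toLp_smul]

lemma projT_eq_cross3_cross3 {x : E3} (hx : ‖x‖ = 1) (v : E3) :
    projT x v = cross3 (cross3 x v) x := by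
  rw [cross3_cross3_left, real_inner_self_eq_norm_sq, hx, one_pow, one_smul, projT]

/-- For a tangential vector u = u(x) at a point x of the unit sphere (u·x = 0) and any
vector w = (∇ × ũ)(x) ∈ ℝ³, the projection of u × w onto the tangent plane equals
(u × x) multiplied by the scalar curl x·w, i.e.
π_x(ũ(x) × (∇×ũ)(x)) = (x · (∇×ũ)(x)) • (u(x) × x). -/
theorem stmt_1 (x u w : E3) (hx : ‖x‖ = 1) (hu : ⟪u, x⟫ = 0) :
    projT x (cross3 u w) = ⟪x, w⟫ • cross3 u x := by
  calc projT x (cross3 u w) = cross3 (cross3 x (cross3 u w)) x := projT_eq_cross3_cross3 hx _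
    _ = cross3 (⟪x, w⟫ • u) x := by rw [cross3_cross3_right, hu, zero_smul, sub_zero]
    _ = ⟪x, w⟫ • cross3 u x := cross3_smul_left _ _ _
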